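/- arXiv:2007.11929 — 2 statements merged into one kernel-verified Lean document; each statement's English description precedes it below -/
import Mathlib

section
/- Let n ≥ 1, let A ∈ Matrix (Fin n) (Fin n) ℝ, and let (i_1,j_1),…,(i_m,j_m) be pairs in Fin n (self-loops allowed). Let G*_contr be the digraph on Fin n with arc set {(i_1,j_1),…,(i_m,j_m)}, and let G*_drift be the digraph with an arc (i,j) exactly when A i j ≠ 0. Suppose: (a) within each weakly connected component of G*_contr every vertex is reachable from every other by a directed path in G*_contr; (b) every weakly connected component of G*_contr contains at least two vertices; (c) the union digraph G*_drift ∪ G*_contr is strongly connected; and (d) G*_contr has at least one self-loop (some i_k = j_k). Then the Lie subalgebra of Matrix (Fin n) (Fin n) ℝ generated by {A} ∪ {E i_1 j_1, …, E i_m j_m} equals ⊤ (all of Matrix (Fin n) (Fin n) ℝ). (This is the Lie algebra rank condition ensuring accessibility of the bilinear system with drift A on GL⁺(n).) -/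
/-!
Let `i₀` carry the self-loop and `C₀` be its weak component. Along directed controlled paths,
`⁅E a b, E b c⁆ = E a c` yields every `E u v` with `u ≠ v` in a common component, and
`E u u = ⁅E u i₀, E i₀ u⁆ + E i₀ i₀` then gives `gl(C₀)`. The property "`E s w` lies in the
algebra for all `s ∈ C₀`" propagates along every arc `x → y` of the union digraph: by one
bracket with `E x y` if `x` and `y` lie in a common controlled component, and otherwise
(`A x y ≠ 0`) through `⁅⁅⁅E s x, A⁆, E y d⁆, E s s⁆ = -A x y • E s d`, where `s ∈ C₀ \ {x}`
and `d ≠ y` is another vertex of the component of `y`. Strong connectivity thus gives every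
`E i₀ w`. Transposition reverses all arcs and preserves the hypotheses, so it also gives every
`E w i₀`, and `E u v = ⁅E u i₀, E i₀ v⁆ (+ E i₀ i₀ if u = v)`.
-/

open Matrix

attribute [local instance 100] LieRing.ofAssociativeRing

/-- The standard basis matrix `E i j`. -/
noncomputable def E {n : ℕ} (i j : Fin n) : Matrix (Fin n) (Fin n) ℝ :=
  Matrix.single i j 1

/-- A digraph is strongly connected if every vertex is reachable from every vertex. -/
def StronglyConnected {V : Type*} (Adj : V → V → Prop) : Prop :=
  ∀ u v : V, Relation.ReflTransGen Adj u v

/-- Two vertices are weakly connected if one is reachable from the other in the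
symmetric closure of the adjacency relation. -/
def WeaklyConnected {V : Type*} (Adj : V → V → Prop) (u v : V) : Prop :=
  Relation.ReflTransGen (fun a b => Adj a b ∨ Adj b a) u v

namespace WeaklyConnected

variable {V : Type*} {r : V → V → Prop} {u v w : V}

theorem refl (u : V) : WeaklyConnected r u u := Relation.ReflTransGen.refl

theorem of_reflTransGen (h : Relation.ReflTransGen r u v) : WeaklyConnected r u v :=
  Relation.ReflTransGen.mono (fun _ _ => Or.inl) _ _ h

theorem symm (h : WeaklyConnected r u v) : WeaklyConnected r v u :=
  have : Std.Symm fun a b => r a b ∨ r b a := ⟨fun _ _ => Or.symm⟩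
  Std.Symm.symm (r := Relation.ReflTransGen _) _ _ h

theorem trans (h₁ : WeaklyConnected r u v) (h₂ : WeaklyConnected r v w) :
    WeaklyConnected r u w :=
  Relation.ReflTransGen.trans h₁ h₂

theorem flip_iff : WeaklyConnected (flip r) u v ↔ WeaklyConnected r u v :=
  ⟨Relation.ReflTransGen.mono (fun _ _ => Or.symm) _ _,
    Relation.ReflTransGen.mono (fun _ _ => Or.symm) _ _⟩

end WeaklyConnected

section MatrixUnits

variable {n : ℕ}

theorem E_mul_E (a b c d : Fin n) : E a b * E c d = if b = c then E a d else 0 := by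
  split_ifs with h
  · subst h
    simp [E]
  · exact single_mul_single_of_ne 1 a b c h 1

theorem lie_E_E (a b c d : Fin n) :
    ⁅E a b, E c d⁆ = (if b = c then E a d else 0) - (if d = a then E c b else 0) := by
  rw [Ring.lie_def, E_mul_E, E_mul_E]

theorem lie_E_E_of_ne {a b c : Fin n} (h : c ≠ a) : ⁅E a b, E b c⁆ = E a c := by
  rw [lie_E_E, if_pos rfl, if_neg h, sub_zero]

theorem E_mul_mul_E (A : Matrix (Fin n) (Fin n) ℝ) (a b c d : Fin n) :
    E a b * A * E c d = A b c • E a d := by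
  simp [E, smul_single]

theorem lie_lie_E_E (A : Matrix (Fin n) (Fin n) ℝ) {a b c d : Fin n} (hbc : b ≠ c) (hda : d ≠ a) :
    ⁅⁅E a b, A⁆, E c d⁆ = A b c • E a d + A d a • E c b := by
  have h₁ : E a b * E c d = 0 := by simp [E_mul_E, hbc]
  have h₂ : E c d * E a b = 0 := by simp [E_mul_E, hda]
  rw [Ring.lie_def, Ring.lie_def, sub_mul, mul_sub, mul_assoc A, h₁, mul_zero,
    ← mul_assoc (E c d), h₂, zero_mul, sub_zero, E_mul_mul_E, ← mul_assoc, E_mul_mul_E]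
  abel

end MatrixUnits

section LieSubalgebra

variable {n : ℕ} {L : LieSubalgebra ℝ (Matrix (Fin n) (Fin n) ℝ)}

theorem E_mem_of_E_mem_of_E_mem {i u v : Fin n} (hii : E i i ∈ L) (hui : E u i ∈ L)
    (hiv : E i v ∈ L) : E u v ∈ L := by
  have h := L.add_mem (L.lie_mem hui hiv) (L.smul_mem (if v = u then 1 else 0) hii)
  rwa [lie_E_E, if_pos rfl, ite_smul, one_smul, zero_smul, sub_add_cancel] at h

theorem E_mem_of_drift {A : Matrix (Fin n) (Fin n) ℝ} {s x y d : Fin n} (hA : A ∈ L)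
    (hsx : E s x ∈ L) (hss : E s s ∈ L) (hyd : E y d ∈ L) (hdy : E d y ∈ L) (hAxy : A x y ≠ 0)
    (hxy : x ≠ y) (hs_ne_x : s ≠ x) (hs_ne_y : s ≠ y) (hs_ne_d : s ≠ d) : E s y ∈ L := by
  have key : ⁅⁅⁅E s x, A⁆, E y d⁆, E s s⁆ = (-A x y) • E s d := by
    rw [lie_lie_E_E A hxy hs_ne_d.symm, add_lie, smul_lie, smul_lie, lie_E_E, lie_E_E,
      if_neg hs_ne_d.symm, if_pos rfl, if_neg hs_ne_x.symm, if_neg hs_ne_y]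
    simp
  have hsd : E s d ∈ L := by
    have h := L.smul_mem (-A x y)⁻¹ (L.lie_mem (L.lie_mem (L.lie_mem hsx hA) hyd) hss)
    rwa [key, smul_smul, inv_mul_cancel₀ (neg_ne_zero.mpr hAxy), one_smul] at h
  simpa only [lie_E_E_of_ne hs_ne_y.symm] using L.lie_mem hsd hdy

theorem eq_top_of_forall_E_mem (h : ∀ u v : Fin n, E u v ∈ L) : L = ⊤ := by
  refine eq_top_iff.mpr fun M _ => Matrix.induction_on' M L.zero_mem (fun _ _ => L.add_mem) ?_
  intro u v c
  simpa [E, smul_single] using L.smul_mem c (h u v)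

end LieSubalgebra

namespace LieSubalgebra

variable {R ι : Type*} [CommRing R] [Fintype ι] [DecidableEq ι]

def transpose (L : LieSubalgebra R (Matrix ι ι R)) : LieSubalgebra R (Matrix ι ι R) where
  carrier := {X | Xᵀ ∈ L}
  add_mem' hX hY := by simpa using L.add_mem hX hY
  zero_mem' := by simp
  smul_mem' c X hX := by simpa using L.smul_mem c hX
  lie_mem' {X Y} hX hY := by
    change ⁅X, Y⁆ᵀ ∈ L
    rw [Matrix.lie_transpose]
    exact L.lie_mem hY hX

@[simp]
theorem mem_transpose {L : LieSubalgebra R (Matrix ι ι R)} {X : Matrix ι ι R} :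
    X ∈ L.transpose ↔ Xᵀ ∈ L :=
  Iff.rfl

end LieSubalgebra

section Propagation

open Relation

variable {n : ℕ} {L : LieSubalgebra ℝ (Matrix (Fin n) (Fin n) ℝ)}
  {A : Matrix (Fin n) (Fin n) ℝ} {r : Fin n → Fin n → Prop} {i₀ u v : Fin n}

theorem E_mem_of_reflTransGen (harc : ∀ a b, r a b → E a b ∈ L) (h : ReflTransGen r u v)
    (huv : u ≠ v) : E u v ∈ L := by
  induction h with
  | refl => exact absurd rfl huv
  | @tail x w _ hxw ih =>
    by_cases hux : u = x
    · subst hux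
      exact harc _ _ hxw
    by_cases hxw' : x = w
    · subst hxw'
      exact ih hux
    simpa only [lie_E_E_of_ne (Ne.symm huv)] using L.lie_mem (ih hux) (harc _ _ hxw)

theorem E_mem_of_weaklyConnected (harc : ∀ a b, r a b → E a b ∈ L)
    (hstrong : ∀ u v, WeaklyConnected r u v → ReflTransGen r u v) (h : WeaklyConnected r u v)
    (huv : u ≠ v) : E u v ∈ L :=
  E_mem_of_reflTransGen harc (hstrong u v h) huv

theorem E_mem_of_weaklyConnected_loop (harc : ∀ a b, r a b → E a b ∈ L)
    (hstrong : ∀ u v, WeaklyConnected r u v → ReflTransGen r u v) (hloop : E i₀ i₀ ∈ L)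
    (hu : WeaklyConnected r i₀ u) (hv : WeaklyConnected r i₀ v) : E u v ∈ L := by
  have to_i₀ : E u i₀ ∈ L := by
    by_cases hui : u = i₀
    · exact hui ▸ hloop
    · exact E_mem_of_weaklyConnected harc hstrong hu.symm hui
  have from_i₀ : E i₀ v ∈ L := by
    by_cases hvi : i₀ = v
    · exact hvi ▸ hloop
    · exact E_mem_of_weaklyConnected harc hstrong hv hvi
  exact E_mem_of_E_mem_of_E_mem hloop to_i₀ from_i₀

theorem E_mem_of_E_mem_of_adj (hA : A ∈ L) (harc : ∀ a b, r a b → E a b ∈ L)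
    (hstrong : ∀ u v, WeaklyConnected r u v → ReflTransGen r u v)
    (hnontriv : ∀ v, ∃ u ≠ v, WeaklyConnected r v u) (hloop : E i₀ i₀ ∈ L)
    (hu : ∀ s, WeaklyConnected r i₀ s → E s u ∈ L) (huv : A u v ≠ 0 ∨ r u v) :
    ∀ s, WeaklyConnected r i₀ s → E s v ∈ L := by
  have hC : ∀ {a b}, WeaklyConnected r i₀ a → WeaklyConnected r i₀ b → E a b ∈ L :=
    E_mem_of_weaklyConnected_loop harc hstrong hloop
  by_cases hv : WeaklyConnected r i₀ v
  · exact fun s hs => hC hs hv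
  have hs_ne_v : ∀ {s}, WeaklyConnected r i₀ s → s ≠ v := fun hs h => hv (h ▸ hs)
  by_cases hwuv : WeaklyConnected r u v
  · by_cases hu_eq_v : u = v
    · exact hu_eq_v ▸ hu
    intro s hs
    simpa only [lie_E_E_of_ne (hs_ne_v hs).symm] using
      L.lie_mem (hu s hs) (E_mem_of_weaklyConnected harc hstrong hwuv hu_eq_v)
  have hAuv : A u v ≠ 0 := huv.resolve_right fun h => hwuv (.of_reflTransGen (.single h))
  obtain ⟨d, hdv, hvd⟩ := hnontriv v
  obtain ⟨s₀, hs₀, hs₀u⟩ : ∃ s₀, WeaklyConnected r i₀ s₀ ∧ s₀ ≠ u := by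
    obtain ⟨s, hs, hi₀s⟩ := hnontriv i₀
    by_cases hi₀u : i₀ = u
    · exact ⟨s, hi₀s, hi₀u ▸ hs⟩
    · exact ⟨i₀, .refl i₀, hi₀u⟩
  have hs₀v : E s₀ v ∈ L :=
    E_mem_of_drift hA (hu s₀ hs₀) (hC hs₀ hs₀)
      (E_mem_of_weaklyConnected harc hstrong hvd hdv.symm)
      (E_mem_of_weaklyConnected harc hstrong hvd.symm hdv) hAuv
      (fun h => hwuv (h ▸ .refl u)) hs₀u (hs_ne_v hs₀) (fun h => hv (hs₀.trans (h ▸ hvd.symm)))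
  exact fun s hs => E_mem_of_E_mem_of_E_mem (hC hs₀ hs₀) (hC hs hs₀) hs₀v

theorem E_mem_row_of_stronglyConnected (hA : A ∈ L) (harc : ∀ a b, r a b → E a b ∈ L)
    (hstrong : ∀ u v, WeaklyConnected r u v → ReflTransGen r u v)
    (hnontriv : ∀ v, ∃ u ≠ v, WeaklyConnected r v u) (hloop : E i₀ i₀ ∈ L)
    (hcon : StronglyConnected fun a b => A a b ≠ 0 ∨ r a b) (v : Fin n) : E i₀ v ∈ L := by
  suffices ∀ s, WeaklyConnected r i₀ s → E s v ∈ L from this i₀ (.refl i₀)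
  induction hcon i₀ v with
  | refl => exact fun s hs => E_mem_of_weaklyConnected_loop harc hstrong hloop hs (.refl i₀)
  | tail _ huv ih => exact E_mem_of_E_mem_of_adj hA harc hstrong hnontriv hloop ih huv

theorem LieSubalgebra.eq_top_of_stronglyConnected (hA : A ∈ L)
    (harc : ∀ a b, r a b → E a b ∈ L)
    (hstrong : ∀ u v, WeaklyConnected r u v → ReflTransGen r u v)
    (hnontriv : ∀ v, ∃ u ≠ v, WeaklyConnected r v u) (hloop : E i₀ i₀ ∈ L)
    (hcon : StronglyConnected fun a b => A a b ≠ 0 ∨ r a b) : L = ⊤ := by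
  have row : ∀ v, E i₀ v ∈ L :=
    E_mem_row_of_stronglyConnected hA harc hstrong hnontriv hloop hcon
  have col : ∀ u, E u i₀ ∈ L := by
    have hstrong_flip : ∀ u v, WeaklyConnected (flip r) u v → ReflTransGen (flip r) u v :=
      fun u v h => reflTransGen_swap.mpr (hstrong v u (WeaklyConnected.flip_iff.mp h).symm)
    have hnontriv_flip : ∀ v, ∃ u ≠ v, WeaklyConnected (flip r) v u :=
      fun v => (hnontriv v).imp fun _ ⟨hne, h⟩ => ⟨hne, WeaklyConnected.flip_iff.mpr h⟩
    have hcon_flip : StronglyConnected fun a b => Aᵀ a b ≠ 0 ∨ flip r a b :=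
      fun u v => reflTransGen_swap.mpr (hcon v u)
    intro u
    simpa [E] using E_mem_row_of_stronglyConnected (L := L.transpose) (by simpa)
      (fun a b h => by simpa [E] using harc b a h) hstrong_flip hnontriv_flip
      (by simpa [E] using hloop) hcon_flip u
  exact eq_top_of_forall_E_mem fun u v => E_mem_of_E_mem_of_E_mem hloop (col u) (row v)

end Propagation

theorem GLn_accessibility_sufficient_general
    (n m : ℕ)
    (A : Matrix (Fin n) (Fin n) ℝ)
    (ij : Fin m → Fin n × Fin n)
    (contrAdj driftAdj : Fin n → Fin n → Prop)
    (hcontr : contrAdj = fun a b => ∃ k, ij k = (a, b))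
    (hdrift : driftAdj = fun a b => A a b ≠ 0)
    (ha : ∀ u v : Fin n, WeaklyConnected contrAdj u v → Relation.ReflTransGen contrAdj u v)
    (hb : ∀ v : Fin n, 2 ≤ {u : Fin n | WeaklyConnected contrAdj v u}.ncard)
    (hcon : StronglyConnected (fun a b : Fin n => driftAdj a b ∨ contrAdj a b))
    (hloop : ∃ k, (ij k).1 = (ij k).2) :
    LieSubalgebra.lieSpan ℝ (Matrix (Fin n) (Fin n) ℝ)
        ({A} ∪ Set.range fun k => E (ij k).1 (ij k).2) = ⊤ := by
  subst hcontr hdrift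
  have hgen : ∀ k, E (ij k).1 (ij k).2 ∈ LieSubalgebra.lieSpan ℝ (Matrix (Fin n) (Fin n) ℝ)
      ({A} ∪ Set.range fun k => E (ij k).1 (ij k).2) :=
    fun k => LieSubalgebra.subset_lieSpan (Or.inr ⟨k, rfl⟩)
  obtain ⟨k₀, hk₀⟩ := hloop
  refine LieSubalgebra.eq_top_of_stronglyConnected (i₀ := (ij k₀).1)
    (LieSubalgebra.subset_lieSpan (Or.inl rfl)) ?_ ha ?_ (hk₀ ▸ hgen k₀) hcon
  · rintro a b ⟨k, hk⟩
    simpa [hk] using hgen k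
  · intro v
    obtain ⟨u, hu, hne⟩ := Set.exists_ne_of_one_lt_ncard (hb v) v
    exact ⟨u, hne, hu⟩

/-- Sufficient Lie algebra rank condition for accessibility on `GL⁺(n)`:
if each weakly connected component of the controlled interaction digraph is strongly
connected with at least two nodes, the union digraph is strongly connected and the
controlled digraph has a self-loop, then the generated Lie algebra is all of
`gl(n, ℝ)`. -/
theorem GLn_accessibility_sufficient
    (n m : ℕ) (hn : 1 ≤ n)
    (A : Matrix (Fin n) (Fin n) ℝ)
    (ij : Fin m → Fin n × Fin n)
    (contrAdj driftAdj : Fin n → Fin n → Prop)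
    (hcontr : contrAdj = fun a b => ∃ k, ij k = (a, b))
    (hdrift : driftAdj = fun a b => A a b ≠ 0)
    (ha : ∀ u v : Fin n, WeaklyConnected contrAdj u v → Relation.ReflTransGen contrAdj u v)
    (hb : ∀ v : Fin n, 2 ≤ {u : Fin n | WeaklyConnected contrAdj v u}.ncard)
    (hcon : StronglyConnected (fun a b : Fin n => driftAdj a b ∨ contrAdj a b))
    (hloop : ∃ k, (ij k).1 = (ij k).2) :
    LieSubalgebra.lieSpan ℝ (Matrix (Fin n) (Fin n) ℝ)
        ({A} ∪ Set.range fun k => E (ij k).1 (ij k).2) = ⊤ :=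
  GLn_accessibility_sufficient_general n m A ij contrAdj driftAdj hcontr hdrift ha hb hcon hloop
end

section
/- Let n ≥ 1, let A ∈ Matrix (Fin n) (Fin n) ℝ be skew-symmetric (Aᵀ = -A), and let (i_1,j_1),…,(i_m,j_m) be pairs in Fin n with i_k ≠ j_k. Let G_contr be the simple graph on Fin n with edge set {{i_1,j_1},…,{i_m,j_m}} and G_drift the simple graph with an edge {i,j} (i ≠ j) exactly when A i j ≠ 0. If the union graph G_drift ⊔ G_contr is not connected, then the Lie subalgebra of Matrix (Fin n) (Fin n) ℝ generated by {A} ∪ {B i_1 j_1, …, B i_m j_m} is a proper subset of so(n); equivalently, if this generated Lie subalgebra equals so(n), then G_drift ⊔ G_contr is connected. -/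
open Matrix

attribute [local instance] LieRing.ofAssociativeRing

/-- `B i j = E i j - E j i`, a basis element of `so(n)`. -/
noncomputable def B {n : ℕ} (i j : Fin n) : Matrix (Fin n) (Fin n) ℝ :=
  E i j - E j i

/-- The special orthogonal Lie algebra `so(n)` of skew-symmetric matrices. -/
def so (n : ℕ) : LieSubalgebra ℝ (Matrix (Fin n) (Fin n) ℝ) where
  carrier := {X | Xᵀ = -X}
  add_mem' := by
    intro X Y hX hY
    simp only [Set.mem_setOf_eq] at *
    rw [Matrix.transpose_add, hX, hY, neg_add]
  zero_mem' := by simp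
  smul_mem' := by
    intro c X hX
    simp only [Set.mem_setOf_eq] at *
    rw [Matrix.transpose_smul, hX, smul_neg]
  lie_mem' := by
    intro X Y hX hY
    simp only [Set.mem_setOf_eq] at *
    rw [Ring.lie_def, Matrix.transpose_sub, Matrix.transpose_mul, Matrix.transpose_mul, hX, hY]
    simp [neg_mul_neg, neg_sub]

/-!
Every generator has nonzero entries only at pairs `(p, q)` with `q` reachable from `p` in
`Gdrift ⊔ Gcontr`. Since reachability is transitive, the matrices with this property are closed
under products, so they form a Lie subalgebra containing the generated one. If `u` and `v` lie in
different components, `B u v ∈ so(n)` has `(u, v)` entry `1`, so it is not generated.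
-/

namespace Matrix

variable {ι R : Type*} [Fintype ι] [DecidableEq ι] [CommRing R]

def supportedLieSubalgebra (r : ι → ι → Prop) [IsTrans ι r] :
    LieSubalgebra R (Matrix ι ι R) where
  carrier := {X | ∀ p q, ¬ r p q → X p q = 0}
  add_mem' hX hY p q h := by rw [add_apply, hX p q h, hY p q h, add_zero]
  zero_mem' _ _ _ := rfl
  smul_mem' c X hX p q h := by rw [smul_apply, hX p q h, smul_zero]
  lie_mem' {X Y} hX hY p q h := by
    have mul_apply_eq_zero {U V : Matrix ι ι R} (hU : ∀ p q, ¬ r p q → U p q = 0)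
        (hV : ∀ p q, ¬ r p q → V p q = 0) : (U * V) p q = 0 := by
      rw [mul_apply]
      refine Finset.sum_eq_zero fun k _ => ?_
      by_cases hpk : r p k
      · rw [hV k q fun hkq => h (_root_.trans hpk hkq), mul_zero]
      · rw [hU p k hpk, zero_mul]
    rw [Ring.lie_def, Matrix.sub_apply, mul_apply_eq_zero hX hY, mul_apply_eq_zero hY hX, sub_zero]

end Matrix

theorem B_mem_so {n : ℕ} (i j : Fin n) : B i j ∈ so n := by
  ext p q
  simp [B, E, Matrix.single, and_comm]

theorem B_apply_ne_zero {n : ℕ} {i j p q : Fin n} (h : B i j p q ≠ 0) :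
    (i, j) = (p, q) ∨ (i, j) = (q, p) := by
  simp only [Prod.mk.injEq]
  by_contra hne
  refine h ?_
  rw [B, E, E, Matrix.sub_apply, single_apply_of_ne, single_apply_of_ne, sub_zero] <;> tauto

theorem B_apply_self_of_ne {n : ℕ} {i j : Fin n} (h : i ≠ j) : B i j i j = 1 := by
  simp [B, E, h]

theorem SOn_not_connected_implies_proper_general
    (n m : ℕ) (hn : 1 ≤ n) (A : Matrix (Fin n) (Fin n) ℝ) (hA : Aᵀ = -A)
    (ij : Fin m → Fin n × Fin n)
    (Gcontr Gdrift : SimpleGraph (Fin n))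
    (hGc : Gcontr = SimpleGraph.fromRel fun a b => ∃ k, ij k = (a, b))
    (hGd : Gdrift = SimpleGraph.fromRel fun a b => A a b ≠ 0)
    (hconn : ¬ (Gdrift ⊔ Gcontr).Connected) :
    LieSubalgebra.lieSpan ℝ (Matrix (Fin n) (Fin n) ℝ)
        ({A} ∪ Set.range fun k => B (ij k).1 (ij k).2) < so n := by
  set G := Gdrift ⊔ Gcontr
  have : Nonempty (Fin n) := ⟨⟨0, hn⟩⟩
  obtain ⟨u, v, huv⟩ : ∃ u v, ¬ G.Reachable u v := by
    simpa [SimpleGraph.connected_iff, SimpleGraph.Preconnected, this] using hconn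
  have reach_of_adj {p q : Fin n} (hpq : p ≠ q → G.Adj p q) : G.Reachable p q := by
    rcases eq_or_ne p q with rfl | hne
    exacts [.refl p, (hpq hne).reachable]
  have : IsTrans (Fin n) G.Reachable := ⟨fun _ _ _ => .trans⟩
  let L := supportedLieSubalgebra (R := ℝ) G.Reachable
  have span_le_L : LieSubalgebra.lieSpan ℝ _ ({A} ∪ Set.range fun k => B (ij k).1 (ij k).2) ≤ L := by
    refine LieSubalgebra.lieSpan_le.mpr ?_
    rintro X (rfl | ⟨k, rfl⟩) p q hpq <;> by_contra hX <;> refine hpq (reach_of_adj fun hne => ?_)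
    · simp [G, hGd, hne, hX]
    · simp only [G, hGc, hne, SimpleGraph.sup_adj, SimpleGraph.fromRel_adj, ne_eq,
        not_false_eq_true, true_and]
      exact .inr ((B_apply_ne_zero hX).imp (⟨k, ·⟩) (⟨k, ·⟩))
  refine lt_of_le_of_ne (LieSubalgebra.lieSpan_le.mpr ?_) fun heq => ?_
  · rintro X (rfl | ⟨k, rfl⟩)
    exacts [hA, B_mem_so _ _]
  · have hB : B u v ∈ L := span_le_L (heq ▸ B_mem_so u v)
    have hne : u ≠ v := fun h => huv (h ▸ .refl u)
    exact one_ne_zero ((B_apply_self_of_ne hne).symm.trans (hB u v huv))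

/-- Necessity of union-graph connectivity for controllability on `SO(n)`: if the
union of the drift and controlled interaction graphs is not connected, then the
generated Lie algebra is a proper Lie subalgebra of `so(n)`. -/
theorem SOn_not_connected_implies_proper
    (n m : ℕ) (hn : 1 ≤ n) (A : Matrix (Fin n) (Fin n) ℝ) (hA : Aᵀ = -A)
    (ij : Fin m → Fin n × Fin n) (hij : ∀ k, (ij k).1 ≠ (ij k).2)
    (Gcontr Gdrift : SimpleGraph (Fin n))
    (hGc : Gcontr = SimpleGraph.fromRel fun a b => ∃ k, ij k = (a, b))
    (hGd : Gdrift = SimpleGraph.fromRel fun a b => A a b ≠ 0)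
    (hconn : ¬ (Gdrift ⊔ Gcontr).Connected) :
    LieSubalgebra.lieSpan ℝ (Matrix (Fin n) (Fin n) ℝ)
        ({A} ∪ Set.range fun k => B (ij k).1 (ij k).2) < so n :=
  SOn_not_connected_implies_proper_general n m hn A hA ij Gcontr Gdrift hGc hGd hconn
end
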